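/- arXiv:1702.04631 — 7 statements merged into one kernel-verified Lean document; each statement's English description precedes it below -/
import Mathlib

section
/- For every natural number N ≥ 1, in the formal power series ring over the polynomial ring ℤ[y], the coefficient of x^N in the finite product ∏_{n=1}^{N} (1 − y·x^n)⁻¹ equals the polynomial Σ_{k=1}^{N} λ(N|k)·y^k. -/
/-- `restrictedPartitionCount N k` is λ(N|k), the number of partitions of `N`
into exactly `k` parts. -/
def restrictedPartitionCount (N k : ℕ) : ℕ :=
  (Finset.univ.filter fun P : Nat.Partition N => P.parts.card = k).card

/-!
Each factor is a geometric series in `y xⁿ`: it is `1 / (1 - y x)` rescaled and then expanded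
by `x ↦ xⁿ`, so its coefficient of `x^(j n)` is `y ^ j` and all other coefficients vanish.
Expanding the product, the terms contributing to `x ^ N` choose multiplicities `j_n` with
`∑ n j_n = N`, i.e. a partition of `N` with `j_n` parts equal to `n`, and contribute
`y ^ (∑ j_n)`, one power of `y` per part.
-/

open Finset PowerSeries

namespace PowerSeries

variable {R : Type*} [CommRing R]

theorem invOfUnit_one_sub_C_mul_X_pow (a : R) {n : ℕ} (hn : n ≠ 0) :
    invOfUnit (1 - C a * X ^ n) 1 = expand n hn (rescale a (mk 1)) := by
  have hconst : constantCoeff (1 - C a * X ^ n) = ((1 : Rˣ) : R) := by simp [hn]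
  refine left_inv_eq_right_inv (invOfUnit_mul _ 1 hconst) ?_
  have : 1 - C a * X ^ n = expand n hn (rescale a (1 - X)) := by simp [expand_C]
  rw [this, ← map_mul, ← map_mul, mul_comm, mk_one_mul_one_sub_eq_one, map_one, map_one]

theorem coeff_invOfUnit_one_sub_C_mul_X_pow (a : R) {n : ℕ} (hn : n ≠ 0) (m : ℕ) :
    coeff m (invOfUnit (1 - C a * X ^ n) 1) = if n ∣ m then a ^ (m / n) else 0 := by
  simp [invOfUnit_one_sub_C_mul_X_pow a hn, coeff_expand]

end PowerSeries

namespace Nat.Partition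

theorem mem_Icc_of_mem_parts {N n : ℕ} {p : N.Partition} (hn : n ∈ p.parts) : n ∈ Icc 1 N :=
  mem_Icc.mpr ⟨p.parts_pos hn, le_of_mem_parts hn⟩

theorem card_parts_mem_Icc {N : ℕ} (hN : 0 < N) (p : N.Partition) :
    Multiset.card p.parts ∈ Icc 1 N := by
  refine mem_Icc.mpr ⟨Multiset.card_pos.mpr fun h => ?_, ?_⟩
  · have := p.parts_sum
    simp [h] at this
    omega
  · simpa [p.parts_sum] using Multiset.card_nsmul_le_sum fun _ hx => p.parts_pos hx

theorem exists_toFinsuppAntidiag_eq {N : ℕ} {g : ℕ →₀ ℕ}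
    (hg : g ∈ (Icc 1 N).finsuppAntidiag N) (hdvd : ∀ n ∈ Icc 1 N, n ∣ g n) :
    ∃ p : N.Partition, p.toFinsuppAntidiag = g := by
  obtain ⟨hsum, hsupp⟩ := mem_finsuppAntidiag.mp hg
  set parts := ∑ n ∈ Icc 1 N, Multiset.replicate (g n / n) n
  have hparts : parts.sum = N := by
    simp only [parts, Multiset.sum_sum, Multiset.sum_replicate, smul_eq_mul]
    exact (sum_congr rfl fun n hn => Nat.div_mul_cancel (hdvd n hn)).trans hsum
  have hcount (m : ℕ) : parts.count m = if m ∈ Icc 1 N then g m / m else 0 := by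
    simp only [parts, Multiset.count_sum', Multiset.count_replicate, sum_ite_eq']
  refine ⟨ofSums N parts hparts, Finsupp.ext fun m => ?_⟩
  show (ofSums N parts hparts).parts.count m * m = g m
  by_cases hm : m ∈ Icc 1 N
  · rw [count_ofSums_of_ne_zero hparts (Nat.one_le_iff_ne_zero.mp (mem_Icc.mp hm).1), hcount,
      if_pos hm, Nat.div_mul_cancel (hdvd m hm)]
  · rw [Multiset.count_eq_zero.mpr fun h => hm (mem_Icc_of_mem_parts h), zero_mul,
      Finsupp.notMem_support_iff.mp fun h => hm (hsupp h)]

variable {R : Type*} [CommRing R]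

theorem prod_coeff_invOfUnit_toFinsuppAntidiag (a : R) {N : ℕ} (p : N.Partition) :
    ∏ n ∈ Icc 1 N, coeff (p.toFinsuppAntidiag n) (invOfUnit (1 - C a * X ^ n) 1) =
      a ^ Multiset.card p.parts := by
  calc _ = ∏ n ∈ Icc 1 N, a ^ p.parts.count n := prod_congr rfl fun n hn => by
          have hn0 : n ≠ 0 := Nat.one_le_iff_ne_zero.mp (mem_Icc.mp hn).1
          show coeff (p.parts.count n * n) _ = _
          rw [coeff_invOfUnit_one_sub_C_mul_X_pow a hn0, if_pos (dvd_mul_left n _),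
            Nat.mul_div_cancel _ (Nat.pos_of_ne_zero hn0)]
    _ = a ^ Multiset.card p.parts := by
          rw [prod_pow_eq_pow_sum, Multiset.sum_count_eq_card fun _ => mem_Icc_of_mem_parts]

theorem sum_pow_card_parts_eq_coeff_prod (a : R) (N : ℕ) :
    ∑ p : N.Partition, a ^ Multiset.card p.parts =
      coeff N (∏ n ∈ Icc 1 N, invOfUnit (1 - C a * X ^ n) 1) := by
  rw [coeff_prod]
  refine sum_of_injOn toFinsuppAntidiag (toFinsuppAntidiag_injective N).injOn
    (fun p _ => toFinsuppAntidiag_mem_finsuppAntidiag p) (fun g hg hg_range => ?_)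
    (fun p _ => (prod_coeff_invOfUnit_toFinsuppAntidiag a p).symm)
  obtain ⟨n, hn, hndvd⟩ : ∃ n ∈ Icc 1 N, ¬ n ∣ g n := by
    by_contra! hdvd
    obtain ⟨p, rfl⟩ := exists_toFinsuppAntidiag_eq hg hdvd
    exact hg_range ⟨p, mem_coe.mpr (mem_univ p), rfl⟩
  refine prod_eq_zero hn ?_
  rw [coeff_invOfUnit_one_sub_C_mul_X_pow a (Nat.one_le_iff_ne_zero.mp (mem_Icc.mp hn).1),
    if_neg hndvd]

theorem sum_pow_card_parts_eq_sum_restrictedPartitionCount (a : R) {N : ℕ} (hN : 0 < N) :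
    ∑ p : N.Partition, a ^ Multiset.card p.parts =
      ∑ k ∈ Icc 1 N, (restrictedPartitionCount N k : R) * a ^ k := by
  rw [← sum_fiberwise_of_maps_to fun p _ => card_parts_mem_Icc hN p]
  refine sum_congr rfl fun k _ => ?_
  rw [sum_congr rfl fun p hp => by rw [(mem_filter.mp hp).2], sum_const, nsmul_eq_mul,
    restrictedPartitionCount]

end Nat.Partition

/-- The coefficient of `x^N` in `∏_{n=1}^{N} (1 - y xⁿ)⁻¹`, computed in the ring of
formal power series in `x` over `ℤ[y]`, equals `Σ_{k=1}^{N} λ(N|k) y^k`. -/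
theorem coeff_prod_invOfUnit_eq_sum_restrictedPartitionCount (N : ℕ) (hN : 1 ≤ N) :
    PowerSeries.coeff (R := Polynomial ℤ) N
      (∏ n ∈ Finset.Icc 1 N,
        PowerSeries.invOfUnit
          (1 - PowerSeries.C (R := Polynomial ℤ) Polynomial.X * PowerSeries.X ^ n) 1)
      = ∑ k ∈ Finset.Icc 1 N,
          (restrictedPartitionCount N k : Polynomial ℤ) * Polynomial.X ^ k := by
  rw [← Nat.Partition.sum_pow_card_parts_eq_coeff_prod,
    Nat.Partition.sum_pow_card_parts_eq_sum_restrictedPartitionCount _ hN]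
end

section
/- For every natural number N ≥ 1 and every M ≥ N, the coefficient of x^N in the finite product ∏_{n=1}^{M} (1 − x^n)⁻¹, taken in the formal power series ring ℤ⟦x⟧, equals λ(N), the total number of partitions of N. -/
/-!
Each factor `(1 - xⁿ)⁻¹` is the geometric series `∑ⱼ x^{nj}`, so by Mathlib's generating function
for partitions with restricted parts the product over `1 ≤ n ≤ M` is the generating function of
partitions all of whose parts are at most `M`. A partition of `N ≤ M` has no part larger than `N`,
so this restriction is vacuous at `x^N`.
-/

open Finset PowerSeries
open scoped PowerSeries.WithPiTopology

theorem PowerSeries.invOfUnit_one_sub_eq_tsum_pow {R : Type*} [CommRing R] [TopologicalSpace R]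
    [IsTopologicalRing R] [T2Space R] {f : R⟦X⟧} (hf : constantCoeff f = 0) :
    invOfUnit (1 - f) 1 = ∑' i, f ^ i :=
  left_inv_eq_right_inv (invOfUnit_mul _ 1 (by simp [hf]))
    (WithPiTopology.one_sub_mul_tsum_pow_of_constantCoeff_eq_zero hf)

namespace Nat.Partition

theorem prod_Icc_invOfUnit_one_sub_X_pow (R : Type*) [CommRing R] (m : ℕ) :
    ∏ i ∈ Icc 1 m, invOfUnit (1 - X ^ i : R⟦X⟧) 1 =
      PowerSeries.mk fun n ↦ (#(restricted n (· ≤ m)) : R) := by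
  -- the identity is algebraic: the discrete topology only serves to use the infinite product
  let _ : TopologicalSpace R := ⊥
  have _ : DiscreteTopology R := ⟨rfl⟩
  have hfactors : ∀ i ∉ range m,
      (if i + 1 ≤ m then ∑' j : ℕ, X ^ ((i + 1) * j) else 1 : R⟦X⟧) = 1 := fun i hi ↦
    if_neg (by simpa using hi)
  refine Eq.trans ?_ ((hasProd_prod_of_ne_finset_one hfactors).unique
    (hasProd_powerSeriesMk_card_restricted R (· ≤ m)))
  rw [range_eq_Ico, prod_Ico_add' (fun i ↦ if i ≤ m then ∑' j : ℕ, (X : R⟦X⟧) ^ (i * j) else 1),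
    zero_add, Ico_add_one_right_eq_Icc]
  refine prod_congr rfl fun i hi ↦ ?_
  have hi0 : i ≠ 0 := Nat.one_le_iff_ne_zero.mp (mem_Icc.mp hi).1
  rw [if_pos (mem_Icc.mp hi).2, invOfUnit_one_sub_eq_tsum_pow (by simp [hi0])]
  simp only [pow_mul]

theorem restricted_le_eq_univ {n m : ℕ} (h : n ≤ m) : restricted n (· ≤ m) = univ :=
  filter_true_of_mem fun _ _ _ hi ↦ (le_of_mem_parts hi).trans h

end Nat.Partition

theorem coeff_prod_invOfUnit_eq_partitionCount_general (N M : ℕ) (hM : N ≤ M) :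
    PowerSeries.coeff (R := ℤ) N
      (∏ n ∈ Finset.Icc 1 M, PowerSeries.invOfUnit (1 - PowerSeries.X ^ n) 1)
      = Fintype.card (Nat.Partition N) := by
  rw [Nat.Partition.prod_Icc_invOfUnit_one_sub_X_pow, coeff_mk,
    Nat.Partition.restricted_le_eq_univ hM, card_univ]

/-- For `N ≥ 1` and `M ≥ N`, the coefficient of `x^N` in `∏_{n=1}^{M} (1 - xⁿ)⁻¹`,
computed in `ℤ⟦x⟧`, equals `λ(N)`, the total number of partitions of `N`. -/
theorem coeff_prod_invOfUnit_eq_partitionCount (N M : ℕ) (hN : 1 ≤ N) (hM : N ≤ M) :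
    PowerSeries.coeff (R := ℤ) N
      (∏ n ∈ Finset.Icc 1 M, PowerSeries.invOfUnit (1 - PowerSeries.X ^ n) 1)
      = Fintype.card (Nat.Partition N) :=
  coeff_prod_invOfUnit_eq_partitionCount_general N M hM
end

section
/- For every natural number n ≥ 1 there exist complex coefficients c_{n+1}, …, c_{2n} such that for all z ≠ 0, the n-th iterated derivative of the function w ↦ exp(−i/w) at z equals exp(−i/z) · Σ_{k=n+1}^{2n} c_k · z^{−k}, and moreover c_{n+1} = i·(−1)^{n+1}·n! and c_{2n} = i^n. In other words, exp(i/z) · ∂ⁿ_z exp(−i/z) is a Laurent polynomial in 1/z whose terms have degree between n+1 and 2n, with lowest-order coefficient i·(−1)^{n+1}·n! and top coefficient i^n. -/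
/-!
Write `∂ⁿ exp(a/w) = exp(a/w) · Pₙ(1/w)`. The chain rule gives `P₀ = 1` and
`Pₙ₊₁ = -X²(a Pₙ + Pₙ')`. Hence for `n ≥ 1` we get `X^(n+1) ∣ Pₙ` and `deg Pₙ ≤ 2n`; at each
step the coefficient of `X^(n+1)` is multiplied by `-(n+1)` (the `Xⁿ` term of `Pₙ` vanishes)
and the top coefficient by `-a`. The theorem is the case `a = -i`.
-/

open Complex Finset Polynomial Topology

theorem eval_eq_sum_Icc {R : Type*} [Semiring R] {p : R[X]} {a b : ℕ} (hs : p.support ⊆ Icc a b)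
    (x : R) : p.eval x = ∑ k ∈ Icc a b, p.coeff k * x ^ k := by
  rw [eval_eq_sum, sum_def]
  exact sum_subset hs fun k _ hk => by simp [notMem_support_iff.mp hk]

noncomputable def expDivPoly (a : ℂ) : ℕ → ℂ[X]
  | 0 => 1
  | n + 1 => -(X ^ 2 * (C a * expDivPoly a n + derivative (expDivPoly a n)))

theorem hasDerivAt_cexp_div_mul_eval_inv (a : ℂ) (p : ℂ[X]) {z : ℂ} (hz : z ≠ 0) :
    HasDerivAt (fun w => exp (a / w) * p.eval w⁻¹)
      (exp (a / z) * (-(X ^ 2 * (C a * p + derivative p))).eval z⁻¹) z := by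
  have hexp : HasDerivAt (fun w => exp (a / w)) (exp (a / z) * (a * -(z ^ 2)⁻¹)) z := by
    simpa only [div_eq_mul_inv] using ((hasDerivAt_inv hz).const_mul a).cexp
  have heval : HasDerivAt (fun w => p.eval w⁻¹) ((derivative p).eval z⁻¹ * -(z ^ 2)⁻¹) z :=
    (p.hasDerivAt z⁻¹).comp z (hasDerivAt_inv hz)
  refine (hexp.fun_mul heval).congr_deriv ?_
  simp only [eval_neg, eval_mul, eval_pow, eval_X, eval_add, eval_C, inv_pow]
  ring

theorem iteratedDeriv_cexp_div (a : ℂ) (n : ℕ) {z : ℂ} (hz : z ≠ 0) :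
    iteratedDeriv n (fun w => exp (a / w)) z = exp (a / z) * (expDivPoly a n).eval z⁻¹ := by
  induction n generalizing z with
  | zero => simp [expDivPoly]
  | succ n ih =>
    have hev : iteratedDeriv n (fun w => exp (a / w)) =ᶠ[𝓝 z]
        fun w => exp (a / w) * (expDivPoly a n).eval w⁻¹ := by
      filter_upwards [eventually_ne_nhds hz] with w hw using ih hw
    rw [iteratedDeriv_succ, hev.deriv_eq, (hasDerivAt_cexp_div_mul_eval_inv a _ hz).deriv]
    rfl

theorem coeff_expDivPoly_succ (a : ℂ) (n j : ℕ) :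
    (expDivPoly a (n + 1)).coeff (j + 2) =
      -(a * (expDivPoly a n).coeff j + (j + 1) * (expDivPoly a n).coeff (j + 1)) := by
  simp only [expDivPoly, coeff_neg, coeff_X_pow_mul, coeff_add, coeff_C_mul, coeff_derivative]
  ring

theorem natDegree_expDivPoly_le (a : ℂ) (n : ℕ) : (expDivPoly a n).natDegree ≤ 2 * n := by
  induction n with
  | zero => simp [expDivPoly]
  | succ n ih =>
    simp only [expDivPoly, natDegree_neg]
    have hsum : (C a * expDivPoly a n + derivative (expDivPoly a n)).natDegree ≤ 2 * n :=
      natDegree_add_le_of_degree_le ((natDegree_C_mul_le _ _).trans ih)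
        ((natDegree_derivative_le _).trans (by omega))
    calc (X ^ 2 * (C a * expDivPoly a n + derivative (expDivPoly a n))).natDegree
        ≤ 2 + 2 * n := natDegree_mul_le.trans (add_le_add (natDegree_X_pow_le 2) hsum)
      _ = 2 * (n + 1) := by ring

theorem X_pow_dvd_expDivPoly (a : ℂ) {n : ℕ} (hn : 1 ≤ n) : X ^ (n + 1) ∣ expDivPoly a n := by
  induction n, hn using Nat.le_induction with
  | base => exact ⟨-C a, by simp [expDivPoly]⟩
  | succ n _ ih =>
    have hd : X ^ n ∣ derivative (expDivPoly a n) := by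
      simpa using pow_sub_one_dvd_derivative_of_pow_dvd ih
    have hs : X ^ n ∣ C a * expDivPoly a n + derivative (expDivPoly a n) :=
      ((pow_dvd_pow X n.le_succ).trans ih |>.mul_left _).add hd
    rw [expDivPoly, dvd_neg, show n + 1 + 1 = 2 + n by ring, pow_add]
    exact mul_dvd_mul_left _ hs

theorem coeff_expDivPoly_succ_self (a : ℂ) {n : ℕ} (hn : 1 ≤ n) :
    (expDivPoly a n).coeff (n + 1) = a * (-1) ^ n * n.factorial := by
  induction n, hn using Nat.le_induction with
  | base => simp [expDivPoly]
  | succ n hn ih =>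
    have h0 : (expDivPoly a n).coeff n = 0 :=
      X_pow_dvd_iff.mp (X_pow_dvd_expDivPoly a hn) n n.lt_succ_self
    rw [coeff_expDivPoly_succ, h0, ih, Nat.factorial_succ]
    push_cast
    ring

theorem coeff_expDivPoly_two_mul (a : ℂ) (n : ℕ) : (expDivPoly a n).coeff (2 * n) = (-a) ^ n := by
  induction n with
  | zero => simp [expDivPoly]
  | succ n ih =>
    have h0 : (expDivPoly a n).coeff (2 * n + 1) = 0 :=
      coeff_eq_zero_of_natDegree_lt ((natDegree_expDivPoly_le a n).trans_lt (by omega))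
    rw [show 2 * (n + 1) = 2 * n + 2 by ring, coeff_expDivPoly_succ, ih, h0]
    ring

theorem support_expDivPoly_subset (a : ℂ) {n : ℕ} (hn : 1 ≤ n) :
    (expDivPoly a n).support ⊆ Icc (n + 1) (2 * n) := by
  intro k hk
  have hlow : n + 1 ≤ k := by
    by_contra! h
    exact mem_support_iff.mp hk (X_pow_dvd_iff.mp (X_pow_dvd_expDivPoly a hn) k h)
  exact mem_Icc.mpr ⟨hlow, (le_natDegree_of_mem_supp k hk).trans (natDegree_expDivPoly_le a n)⟩

/-- For `n ≥ 1`, the `n`-th derivative of `w ↦ exp(−i/w)` at `z ≠ 0` is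
`exp(−i/z)` times a Laurent polynomial in `1/z` with terms of degree between
`n+1` and `2n`, whose lowest coefficient is `i·(−1)^{n+1}·n!` and whose top
coefficient is `iⁿ`. -/
theorem iteratedDeriv_exp_neg_inv (n : ℕ) (hn : 1 ≤ n) :
    ∃ c : ℕ → ℂ,
      (∀ z : ℂ, z ≠ 0 →
        iteratedDeriv n (fun w => Complex.exp (-Complex.I / w)) z
          = Complex.exp (-Complex.I / z) * ∑ k ∈ Finset.Icc (n + 1) (2 * n), c k * (z ^ k)⁻¹)
      ∧ c (n + 1) = Complex.I * (-1) ^ (n + 1) * n.factorial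
      ∧ c (2 * n) = Complex.I ^ n := by
  refine ⟨(expDivPoly (-I) n).coeff, fun z hz => ?_, ?_, ?_⟩
  · simp only [iteratedDeriv_cexp_div _ n hz, eval_eq_sum_Icc (support_expDivPoly_subset _ hn),
      inv_pow]
  · rw [coeff_expDivPoly_succ_self _ hn]
    ring
  · rw [coeff_expDivPoly_two_mul, neg_neg]
end

section
/- Let f, g : ℂ → ℂ, let z ∈ ℂ, and suppose f is analytic at z and g is analytic at f(z). Then for every n ≥ 1, the n-th iterated derivative of g ∘ f at z equals Σ_{k=1}^{n} g^{(k)}(f(z)) · B_{n,k}(f′(z), f″(z), …, f^{(n−k+1)}(z)), where g^{(k)} denotes the k-th iterated derivative of g (Faà di Bruno's formula in incomplete Bell polynomial form). -/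
/-!
Write `φ(t) = ∑_{j ≥ 1} x_j t^j / j!`. By the multinomial theorem `B_{n,k}(x) = n!/k! · [tⁿ] φᵏ`.
If the `x_j` are functions of `w` with `x_j' = x_{j+1}`, then `∂_w φ = ∂_t φ - x₁`, so
`∂_w φᵏ = ∂_t φᵏ - k x₁ φᵏ⁻¹`, and comparing coefficients gives
`∂_w B_{n,k} = B_{n+1,k} - x₁ B_{n,k-1}`. With `x_j = f⁽ʲ⁾` and `(g⁽ᵏ⁾ ∘ f)' = (g⁽ᵏ⁺¹⁾ ∘ f) · x₁`,
differentiating the formula for `n` therefore yields the formula for `n + 1` after a telescoping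
sum, using `B_{n,0} = 0` and `B_{n,n} = x₁ⁿ`. Working with polynomials truncated at a degree
beyond `n` keeps everything finite.
-/

/-- The incomplete Bell polynomial `B_{n,k}(x₁, …, x_{n−k+1})`: the sum over all tuples
`(p₁, …, p_{n−k+1})` of nonnegative integers with `p₁ + ⋯ + p_{n−k+1} = k` and
`p₁ + 2p₂ + ⋯ + (n−k+1)p_{n−k+1} = n` of
`n!/(p₁!⋯p_{n−k+1}!) · ∏ᵢ (xᵢ/i!)^{pᵢ}`.  (Each `pᵢ` is at most `k ≤ n`, so the
bounded index finset captures all solutions.)  The argument `x j` stands for `x_j`. -/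
noncomputable def bellPoly (n k : ℕ) (x : ℕ → ℂ) : ℂ :=
  ∑ p ∈ Finset.filter
      (fun p : Fin (n - k + 1) → ℕ =>
        (∑ i : Fin (n - k + 1), p i) = k ∧ (∑ i : Fin (n - k + 1), ((i : ℕ) + 1) * p i) = n)
      (Fintype.piFinset fun _ : Fin (n - k + 1) => Finset.range (n + 1)),
    ((n.factorial : ℂ) / ∏ i : Fin (n - k + 1), ((p i).factorial : ℂ)) *
      ∏ i : Fin (n - k + 1), (x ((i : ℕ) + 1) / (((i : ℕ) + 1).factorial : ℂ)) ^ p i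

open Finset Polynomial Topology
open scoped Nat

lemma coeff_X_mul_pow_eq_of_X_pow_dvd_sub {R : Type*} [CommRing R] {a b : R[X]} {M k n : ℕ}
    (hab : X ^ M ∣ a - b) (hn : n < M + k) : ((X * a) ^ k).coeff n = ((X * b) ^ k).coeff n := by
  have hdvd : X ^ (M + k) ∣ (X * a) ^ k - (X * b) ^ k := by
    rw [mul_pow, mul_pow, ← mul_sub, pow_add, mul_comm (X ^ M)]
    exact mul_dvd_mul_left _ (hab.trans (sub_dvd_pow_sub_pow a b k))
  rw [← sub_eq_zero, ← coeff_sub]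
  exact X_pow_dvd_iff.1 hdvd n hn

section HasCoeffDerivAt

variable {𝕜 : Type*} [NontriviallyNormedField 𝕜]

/-- `𝕜[X]` carries no norm, so polynomial-valued functions are differentiated coefficientwise. -/
def HasCoeffDerivAt (P : 𝕜 → 𝕜[X]) (P' : 𝕜[X]) (z : 𝕜) : Prop :=
  ∀ n, HasDerivAt (fun w => (P w).coeff n) (P'.coeff n) z

lemma hasCoeffDerivAt_sum_C_mul_X_pow {ι : Type*} (s : Finset ι) {c : ι → 𝕜 → 𝕜} {c' : ι → 𝕜}
    {z : 𝕜} (hc : ∀ i, HasDerivAt (c i) (c' i) z) (e : ι → ℕ) :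
    HasCoeffDerivAt (fun w => ∑ i ∈ s, C (c i w) * X ^ e i) (∑ i ∈ s, C (c' i) * X ^ e i) z := by
  intro n
  simp only [finsetSum_coeff, coeff_C_mul_X_pow]
  exact HasDerivAt.fun_sum fun i _ => by
    split_ifs
    exacts [hc i, hasDerivAt_const _ _]

lemma HasCoeffDerivAt.mul {P Q : 𝕜 → 𝕜[X]} {P' Q' : 𝕜[X]} {z : 𝕜} (hP : HasCoeffDerivAt P P' z)
    (hQ : HasCoeffDerivAt Q Q' z) :
    HasCoeffDerivAt (fun w => P w * Q w) (P' * Q z + P z * Q') z := by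
  intro n
  simp only [coeff_mul, coeff_add, ← sum_add_distrib]
  exact HasDerivAt.fun_sum fun ij _ => (hP ij.1).mul (hQ ij.2)

lemma HasCoeffDerivAt.pow_succ {P : 𝕜 → 𝕜[X]} {P' : 𝕜[X]} {z : 𝕜} (hP : HasCoeffDerivAt P P' z)
    (k : ℕ) : HasCoeffDerivAt (fun w => P w ^ (k + 1)) (C (k + 1 : 𝕜) * P z ^ k * P') z := by
  induction k with
  | zero => simpa using hP
  | succ k ih =>
    simp only [_root_.pow_succ _ (k + 1)]
    convert ih.mul hP using 1
    push_cast
    simp only [C_add, C_1]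
    ring

end HasCoeffDerivAt

theorem AnalyticAt.hasDerivAt_iteratedDeriv {𝕜 E : Type*} [NontriviallyNormedField 𝕜]
    [CompleteSpace 𝕜] [NormedAddCommGroup E] [NormedSpace 𝕜 E] [CompleteSpace E] {f : 𝕜 → E}
    {z : 𝕜} (hf : AnalyticAt 𝕜 f z) (k : ℕ) :
    HasDerivAt (iteratedDeriv k f) (iteratedDeriv (k + 1) f z) z := by
  rw [iteratedDeriv_succ, iteratedDeriv_eq_iterate]
  exact (hf.iterated_deriv k).differentiableAt.hasDerivAt

noncomputable def egfPoly (x : ℕ → ℂ) (M : ℕ) : ℂ[X] :=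
  ∑ i ∈ range M, C (x (i + 1) / (i + 1)!) * X ^ (i + 1)

lemma egfPoly_eq_X_mul (x : ℕ → ℂ) (M : ℕ) :
    egfPoly x M = X * ∑ i ∈ range M, C (x (i + 1) / (i + 1)!) * X ^ i := by
  rw [egfPoly, mul_sum]
  exact sum_congr rfl fun i _ => by ring

lemma coeff_egfPoly_pow_of_le (x : ℕ → ℂ) {M M' k n : ℕ} (hM : M ≤ M') (hn : n < M + k) :
    (egfPoly x M' ^ k).coeff n = (egfPoly x M ^ k).coeff n := by
  rw [egfPoly_eq_X_mul, egfPoly_eq_X_mul]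
  refine coeff_X_mul_pow_eq_of_X_pow_dvd_sub ?_ hn
  rw [← sum_range_add_sum_Ico _ hM, add_sub_cancel_left]
  exact dvd_sum fun i hi => dvd_mul_of_dvd_right (pow_dvd_pow X (mem_Ico.1 hi).1) _

lemma egfPoly_pow_eq_sum_piAntidiag (x : ℕ → ℂ) (N k : ℕ) :
    egfPoly x N ^ k = ∑ p ∈ piAntidiag (univ : Finset (Fin N)) k,
      C ((Nat.multinomial univ p : ℂ) * ∏ i : Fin N, (x (i + 1) / (i + 1 : ℕ)!) ^ p i) *
        X ^ ∑ i : Fin N, ((i : ℕ) + 1) * p i := by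
  rw [egfPoly, ← Fin.sum_univ_eq_sum_range (fun i => C (x (i + 1) / (i + 1)!) * X ^ (i + 1)),
    sum_pow_eq_sum_piAntidiag]
  refine sum_congr rfl fun p _ => ?_
  simp only [mul_pow, prod_mul_distrib, ← pow_mul, prod_pow_eq_pow_sum, ← C_pow, ← map_prod,
    map_mul, map_natCast]
  rw [mul_assoc]

lemma filter_piAntidiag_eq_filter_piFinset (N n k : ℕ) :
    filter (fun p : Fin N → ℕ => n = ∑ i : Fin N, ((i : ℕ) + 1) * p i) (piAntidiag univ k)
      = filter (fun p : Fin N → ℕ => ∑ i, p i = k ∧ ∑ i : Fin N, ((i : ℕ) + 1) * p i = n)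
          (Fintype.piFinset fun _ => range (n + 1)) := by
  ext p
  simp only [mem_filter, mem_piAntidiag, Fintype.mem_piFinset, mem_range, mem_univ,
    implies_true, and_true]
  constructor
  · rintro ⟨hk, hn⟩
    refine ⟨fun i => Nat.lt_succ_of_le ?_, hk, hn.symm⟩
    calc p i ≤ ((i : ℕ) + 1) * p i := Nat.le_mul_of_pos_left _ i.val.succ_pos
      _ ≤ ∑ j : Fin N, ((j : ℕ) + 1) * p j :=
        single_le_sum (f := fun j : Fin N => ((j : ℕ) + 1) * p j) (fun _ _ => Nat.zero_le _)
          (mem_univ i)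
      _ = n := hn.symm
  · rintro ⟨-, hk, hn⟩
    exact ⟨hk, hn.symm⟩

lemma bellPoly_eq_coeff_egfPoly_sub_add_one_pow (n k : ℕ) (x : ℕ → ℂ) :
    bellPoly n k x = n ! / k ! * (egfPoly x (n - k + 1) ^ k).coeff n := by
  rw [egfPoly_pow_eq_sum_piAntidiag, finsetSum_coeff]
  simp only [coeff_C_mul_X_pow]
  rw [← sum_filter, filter_piAntidiag_eq_filter_piFinset, mul_sum, bellPoly]
  refine sum_congr rfl fun p hp => ?_
  have hspec : (k ! : ℂ) = (∏ i, ((p i)! : ℂ)) * Nat.multinomial univ p := by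
    have h := Nat.multinomial_spec univ p
    rw [(mem_filter.1 hp).2.1] at h
    exact_mod_cast h.symm
  have hprod : (∏ i, ((p i)! : ℂ)) ≠ 0 :=
    prod_ne_zero_iff.2 fun i _ => Nat.cast_ne_zero.2 (Nat.factorial_ne_zero _)
  have hmult : (Nat.multinomial univ p : ℂ) ≠ 0 := Nat.cast_ne_zero.2 (Nat.multinomial_pos _ _).ne'
  rw [hspec]
  field_simp

lemma bellPoly_eq_coeff_egfPoly_pow {n k M : ℕ} (hM : n - k < M) (x : ℕ → ℂ) :
    bellPoly n k x = n ! / k ! * (egfPoly x M ^ k).coeff n := by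
  rw [bellPoly_eq_coeff_egfPoly_sub_add_one_pow,
    coeff_egfPoly_pow_of_le x (M := n - k + 1) (M' := M) (by omega) (by omega)]

lemma bellPoly_zero {n : ℕ} (hn : n ≠ 0) (x : ℕ → ℂ) : bellPoly n 0 x = 0 := by
  simp [bellPoly_eq_coeff_egfPoly_pow (n := n) (k := 0) (M := n + 1) (by omega), coeff_one, hn]

lemma bellPoly_self (n : ℕ) (x : ℕ → ℂ) : bellPoly n n x = x 1 ^ n := by
  have hn : (n ! : ℂ) ≠ 0 := Nat.cast_ne_zero.2 n.factorial_ne_zero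
  rw [bellPoly_eq_coeff_egfPoly_pow (n := n) (k := n) (M := 1) (by omega)]
  simp [egfPoly, mul_pow, hn, ← C_pow, -map_pow]

lemma derivative_egfPoly (x : ℕ → ℂ) (M : ℕ) :
    derivative (egfPoly x M) = C (x 1) + ∑ i ∈ range M, C (x (i + 2) / (i + 1)!) * X ^ (i + 1)
      - C (x (M + 1) / M !) * X ^ M := by
  set d : ℕ → ℂ[X] := fun i => C (x (i + 1) / i !) * X ^ i
  have hd : derivative (egfPoly x M) = ∑ i ∈ range M, d i := by
    rw [egfPoly, derivative_sum]
    refine sum_congr rfl fun i _ => ?_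
    rw [derivative_C_mul_X_pow, Nat.add_sub_cancel, Nat.factorial_succ]
    have : (i ! : ℂ) ≠ 0 := Nat.cast_ne_zero.2 i.factorial_ne_zero
    congr 2
    push_cast
    field_simp
  have hshift := (sum_range_succ' d M).symm.trans (sum_range_succ d M)
  simp only [d, zero_add, add_assoc, Nat.reduceAdd, Nat.factorial_zero, Nat.cast_one, div_one,
    pow_zero, mul_one] at hshift hd
  rw [hd]
  linear_combination (-1 : ℂ[X]) * hshift

lemma hasDerivAt_bellPoly {x : ℕ → ℂ → ℂ} {z : ℂ} (hx : ∀ j, HasDerivAt (x j) (x (j + 1) z) z)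
    {k : ℕ} (hk : 1 ≤ k) (n : ℕ) :
    HasDerivAt (fun w => bellPoly n k (x · w))
      (bellPoly (n + 1) k (x · z) - x 1 z * bellPoly n (k - 1) (x · z)) z := by
  obtain ⟨j, rfl⟩ : ∃ j, k = j + 1 := ⟨k - 1, by omega⟩
  set Φ : ℂ → ℂ[X] := fun w => egfPoly (x · w) (n + 1)
  set Ψ := ∑ i ∈ range (n + 1), C (x (i + 2) z / (i + 1)!) * X ^ (i + 1)
  have hΦ : HasCoeffDerivAt Φ Ψ z :=
    hasCoeffDerivAt_sum_C_mul_X_pow _ (fun i => (hx (i + 1)).div_const ((i + 1)! : ℂ)) _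
  have hΨ : Ψ = derivative (Φ z) - C (x 1 z) + C (x (n + 2) z / (n + 1)!) * X ^ (n + 1) := by
    rw [derivative_egfPoly]
    ring
  -- the truncation error `X ^ (n + 1)` in `hΨ` does not reach the coefficient of `X ^ n`
  have hcoeff : (C (j + 1 : ℂ) * Φ z ^ j * Ψ).coeff n
      = (Φ z ^ (j + 1)).coeff (n + 1) * (n + 1) - (j + 1) * x 1 z * (Φ z ^ j).coeff n := by
    rw [hΨ, mul_add, mul_sub, ← derivative_pow_succ, ← mul_assoc, coeff_add, coeff_sub,
      coeff_derivative, coeff_mul_X_pow', if_neg (by omega), coeff_mul_C, coeff_C_mul]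
    ring
  have hpow := (hΦ.pow_succ j n).const_mul (n ! / (j + 1)! : ℂ)
  rw [hcoeff] at hpow
  have hfun : (fun w => bellPoly n (j + 1) (x · w))
      = fun w => n ! / (j + 1)! * (Φ w ^ (j + 1)).coeff n :=
    funext fun w => bellPoly_eq_coeff_egfPoly_pow (by omega) _
  rw [hfun, bellPoly_eq_coeff_egfPoly_pow (M := n + 1) (by omega),
    bellPoly_eq_coeff_egfPoly_pow (M := n + 1) (by omega), Nat.add_sub_cancel]
  refine hpow.congr_deriv ?_
  simp only [Φ, Nat.factorial_succ]
  push_cast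
  field_simp

lemma hasDerivAt_sum_mul_bellPoly {G x : ℕ → ℂ → ℂ} {z : ℂ}
    (hG : ∀ k, HasDerivAt (G k) (G (k + 1) z * x 1 z) z)
    (hx : ∀ j, HasDerivAt (x j) (x (j + 1) z) z) {n : ℕ} (hn : n ≠ 0) :
    HasDerivAt (fun w => ∑ k ∈ Icc 1 n, G k w * bellPoly n k (x · w))
      (∑ k ∈ Icc 1 (n + 1), G k z * bellPoly (n + 1) k (x · z)) z := by
  refine (HasDerivAt.fun_sum fun k hk =>
    (hG k).mul (hasDerivAt_bellPoly hx (mem_Icc.1 hk).1 n)).congr_deriv ?_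
  set F : ℕ → ℂ := fun k => G k z * x 1 z * bellPoly n (k - 1) (x · z)
  have htelescope : ∑ k ∈ Icc 1 n, (F (k + 1) - F k)
      = G (n + 1) z * bellPoly (n + 1) (n + 1) (x · z) := by
    rw [sum_Icc_sub (by omega)]
    simp only [F, Nat.add_sub_cancel, Nat.sub_self, bellPoly_zero hn, bellPoly_self]
    ring
  rw [sum_Icc_succ_top (by omega), ← htelescope, ← sum_add_distrib]
  refine sum_congr rfl fun k _ => ?_
  simp only [F, Nat.add_sub_cancel]
  ring

/-- Faà di Bruno's formula in incomplete Bell polynomial form: if `f` is analytic at `z`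
and `g` is analytic at `f z`, then for `n ≥ 1`,
`(g ∘ f)⁽ⁿ⁾(z) = Σ_{k=1}^{n} g⁽ᵏ⁾(f z) · B_{n,k}(f′(z), …, f⁽ⁿ⁻ᵏ⁺¹⁾(z))`. -/
theorem iteratedDeriv_comp_eq_sum_bellPoly (f g : ℂ → ℂ) (z : ℂ)
    (hf : AnalyticAt ℂ f z) (hg : AnalyticAt ℂ g (f z)) (n : ℕ) (hn : 1 ≤ n) :
    iteratedDeriv n (g ∘ f) z
      = ∑ k ∈ Finset.Icc 1 n,
          iteratedDeriv k g (f z) * bellPoly n k (fun j => iteratedDeriv j f z) := by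
  induction n, hn using Nat.le_induction generalizing z with
  | base =>
    simp [iteratedDeriv_one, deriv_comp z hg.differentiableAt hf.differentiableAt, bellPoly_self]
  | succ n hn ih =>
    have hev : iteratedDeriv n (g ∘ f) =ᶠ[𝓝 z] fun w => ∑ k ∈ Icc 1 n,
        iteratedDeriv k g (f w) * bellPoly n k (fun j => iteratedDeriv j f w) := by
      filter_upwards [hf.eventually_analyticAt,
        hf.continuousAt.eventually hg.eventually_analyticAt] with w hfw hgw using ih w hfw hgw
    have hG (k : ℕ) : HasDerivAt (fun w => iteratedDeriv k g (f w))
        (iteratedDeriv (k + 1) g (f z) * iteratedDeriv 1 f z) z := by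
      rw [iteratedDeriv_one]
      exact (hg.hasDerivAt_iteratedDeriv k).comp z hf.differentiableAt.hasDerivAt
    rw [iteratedDeriv_succ, hev.deriv_eq]
    exact (hasDerivAt_sum_mul_bellPoly hG hf.hasDerivAt_iteratedDeriv (by omega)).deriv
end

section
/- Let g : ℂ → ℂ be analytic at z ∈ ℂ. Then for every n ≥ 1, the n-th iterated derivative of the function w ↦ exp(g(w)) at z equals exp(g(z)) · Σ_{k=1}^{n} B_{n,k}(g′(z), g″(z), …, g^{(n−k+1)}(z)). -/
/-! The Taylor series of `exp ∘ g` at `z` is the formal composition of the exponential series at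
`g z` with the Taylor series of `g`, whose `n`-th coefficient is a sum over the compositions of
`n`. Grouping the compositions by their number `k` of parts, both the `k`-part sum and
`B_{n,k}` (by the multinomial theorem) are read off the coefficient of `Xⁿ` in
`(∑_{1 ≤ v ≤ n-k+1} g⁽ᵛ⁾(z)/v! Xᵛ)ᵏ`. -/

open Finset Polynomial Nat

section Analytic

variable {𝕜 F : Type*} [NontriviallyNormedField 𝕜] [NormedAddCommGroup F] [NormedSpace 𝕜 F]

theorem HasFPowerSeriesAt.iteratedDeriv_eq_factorial_smul_coeff [CompleteSpace F]
    {f : 𝕜 → F} {p : FormalMultilinearSeries 𝕜 𝕜 F} {x : 𝕜} (h : HasFPowerSeriesAt f p x)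
    (n : ℕ) : iteratedDeriv n f x = n ! • p.coeff n := by
  obtain ⟨r, hr⟩ := h
  rw [iteratedDeriv_eq_iteratedFDeriv, ← hr.factorial_smul 1 n]
  rfl

theorem HasFPowerSeriesAt.coeff_eq_inv_factorial_smul_iteratedDeriv [CharZero 𝕜]
    [CompleteSpace F] {f : 𝕜 → F} {p : FormalMultilinearSeries 𝕜 𝕜 F} {x : 𝕜}
    (h : HasFPowerSeriesAt f p x) (n : ℕ) : p.coeff n = (n ! : 𝕜)⁻¹ • iteratedDeriv n f x := by
  rw [h.iteratedDeriv_eq_factorial_smul_coeff, ← Nat.cast_smul_eq_nsmul 𝕜, smul_smul,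
    inv_mul_cancel₀ (by exact_mod_cast factorial_ne_zero n), one_smul]

theorem FormalMultilinearSeries.coeff_comp (q : FormalMultilinearSeries 𝕜 𝕜 F)
    (p : FormalMultilinearSeries 𝕜 𝕜 𝕜) (n : ℕ) :
    (q.comp p).coeff n =
      ∑ c : Composition n, (∏ i, p.coeff (c.blocksFun i)) • q.coeff c.length := by
  simp only [FormalMultilinearSeries.coeff, FormalMultilinearSeries.comp, _root_.sum_apply,
    FormalMultilinearSeries.compAlongComposition_apply]
  refine sum_congr rfl fun c _ => ?_
  rw [FormalMultilinearSeries.apply_eq_prod_smul_coeff]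
  rfl

theorem AnalyticAt.iteratedDeriv_comp_eq_sum_composition [CharZero 𝕜] [CompleteSpace 𝕜]
    [CompleteSpace F] {f : 𝕜 → F} {g : 𝕜 → 𝕜} {x : 𝕜} (hf : AnalyticAt 𝕜 f (g x))
    (hg : AnalyticAt 𝕜 g x) (n : ℕ) :
    iteratedDeriv n (f ∘ g) x = (n ! : 𝕜) • ∑ c : Composition n,
      ((∏ i, iteratedDeriv (c.blocksFun i) g x / (c.blocksFun i)!) / (c.length)!) •
        iteratedDeriv c.length f (g x) := by
  obtain ⟨q, hq⟩ := hf
  obtain ⟨p, hp⟩ := hg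
  rw [(hq.comp hp).iteratedDeriv_eq_factorial_smul_coeff, ← Nat.cast_smul_eq_nsmul 𝕜,
    FormalMultilinearSeries.coeff_comp]
  congr 1
  refine sum_congr rfl fun c _ => ?_
  simp only [hp.coeff_eq_inv_factorial_smul_iteratedDeriv,
    hq.coeff_eq_inv_factorial_smul_iteratedDeriv, smul_smul, smul_eq_mul, div_eq_mul_inv, mul_comm]

end Analytic

theorem Composition.blocksFun_add_length_le {n : ℕ} (c : Composition n) (i : Fin c.length) :
    c.blocksFun i + c.length ≤ n + 1 := by
  have hsplit := add_sum_erase univ c.blocksFun (mem_univ i)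
  have hrest : (univ.erase i).card • 1 ≤ ∑ j ∈ univ.erase i, c.blocksFun j :=
    card_nsmul_le_sum _ _ 1 fun j _ => c.one_le_blocksFun j
  rw [card_erase_of_mem (mem_univ i), Finset.card_univ, Fintype.card_fin, smul_eq_mul,
    mul_one] at hrest
  rw [c.sum_blocksFun] at hsplit
  omega

theorem sum_composition_length_eq_sum_fin_tuple {R : Type*} [CommSemiring R] (n k : ℕ)
    (y : ℕ → R) :
    ∑ c ∈ univ.filter (fun c : Composition n => c.length = k), ∏ i, y (c.blocksFun i) =
      ∑ f ∈ univ.filter (fun f : Fin k → Fin (n - k + 1) => ∑ j, ((f j : ℕ) + 1) = n),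
        ∏ j, y ((f j : ℕ) + 1) := by
  refine sum_bij'
    (fun c hc j => ⟨c.blocksFun (j.cast (mem_filter.1 hc).2.symm) - 1, by
      have := c.blocksFun_add_length_le (j.cast (mem_filter.1 hc).2.symm)
      have := (mem_filter.1 hc).2
      omega⟩)
    (fun f hf => ⟨List.ofFn fun j => (f j : ℕ) + 1, by simp, by
      rw [List.sum_ofFn]; exact (mem_filter.1 hf).2⟩) ?_ ?_ ?_ ?_ ?_
  · intro c hc
    obtain rfl := (mem_filter.1 hc).2
    simp only [mem_filter, mem_univ, true_and, Fin.cast_eq_self, ← c.sum_blocksFun]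
    exact sum_congr rfl fun i _ => Nat.sub_add_cancel (c.one_le_blocksFun i)
  · intro f _
    simp [Composition.length]
  · intro c hc
    obtain rfl := (mem_filter.1 hc).2
    ext1
    simp only [Fin.cast_eq_self, ← c.ofFn_blocksFun]
    exact congrArg List.ofFn (funext fun i => Nat.sub_add_cancel (c.one_le_blocksFun i))
  · intro f _
    ext j
    simp [Composition.blocksFun]
  · intro c hc
    obtain rfl := (mem_filter.1 hc).2
    simp only [Fin.cast_eq_self]
    exact prod_congr rfl fun i _ => by rw [Nat.sub_add_cancel (c.one_le_blocksFun i)]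

section Coefficients

variable {R ι : Type*} [CommSemiring R]

theorem coeff_pow_sum_C_mul_X_pow (s : Finset ι) (y : ι → R) (e : ι → ℕ) (k n : ℕ) :
    ((∑ i ∈ s, C (y i) * X ^ e i) ^ k).coeff n =
      ∑ f ∈ (Fintype.piFinset fun _ : Fin k => s).filter (fun f => ∑ j, e (f j) = n),
        ∏ j, y (f j) := by
  rw [← Fin.prod_const, prod_univ_sum, finsetSum_coeff, sum_filter]
  refine sum_congr rfl fun f _ => ?_
  rw [prod_mul_distrib, ← map_prod, prod_pow_eq_pow_sum, coeff_C_mul_X_pow]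
  simp only [eq_comm]

theorem coeff_pow_sum_C_mul_X_pow_eq_sum_multinomial [DecidableEq ι] (s : Finset ι)
    (y : ι → R) (e : ι → ℕ) (k n : ℕ) :
    ((∑ i ∈ s, C (y i) * X ^ e i) ^ k).coeff n =
      ∑ p ∈ (piAntidiag s k).filter (fun p => ∑ i ∈ s, e i * p i = n),
        multinomial s p * ∏ i ∈ s, y i ^ p i := by
  rw [sum_pow_eq_sum_piAntidiag, finsetSum_coeff, sum_filter]
  refine sum_congr rfl fun p _ => ?_
  simp_rw [mul_pow, ← C_pow, ← pow_mul]
  rw [prod_mul_distrib, ← map_prod, prod_pow_eq_pow_sum, ← map_natCast C, ← mul_assoc, ← map_mul,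
    coeff_C_mul_X_pow]
  simp only [eq_comm]

end Coefficients

theorem bellPoly_eq_factorial_div_mul_coeff_pow {n k : ℕ} (hk : k ≤ n) (x : ℕ → ℂ) :
    bellPoly n k x = n ! / k ! *
      ((∑ i : Fin (n - k + 1), C (x (i + 1) / (i + 1 : ℕ)!) * X ^ ((i : ℕ) + 1)) ^ k).coeff
        n := by
  rw [coeff_pow_sum_C_mul_X_pow_eq_sum_multinomial, mul_sum, bellPoly]
  refine sum_congr ?_ fun p hp => ?_
  · ext p
    simp only [mem_filter, Fintype.mem_piFinset, mem_range, mem_piAntidiag, mem_univ,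
      implies_true, and_true]
    refine ⟨fun h => h.2, fun h => ⟨fun i => ?_, h⟩⟩
    have hle : p i ≤ k := h.1 ▸ single_le_sum (fun j _ => Nat.zero_le (p j)) (mem_univ i)
    omega
  · have hspec := Nat.multinomial_spec univ p
    rw [(mem_piAntidiag.1 (mem_filter.1 hp).1).1] at hspec
    have hprod : (∏ i, ((p i)! : ℂ)) ≠ 0 :=
      prod_ne_zero_iff.2 fun i _ => Nat.cast_ne_zero.2 (factorial_ne_zero _)
    have hmultinomial : (multinomial univ p : ℂ) = k ! / ∏ i, ((p i)! : ℂ) := by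
      rw [eq_div_iff hprod, mul_comm]
      exact_mod_cast hspec
    have hk : (k ! : ℂ) ≠ 0 := Nat.cast_ne_zero.2 (factorial_ne_zero k)
    rw [hmultinomial]
    field_simp

theorem bellPoly_eq_sum_composition {n k : ℕ} (hk : k ≤ n) (x : ℕ → ℂ) :
    bellPoly n k x = n ! / k ! * ∑ c ∈ univ.filter (fun c : Composition n => c.length = k),
      ∏ i, x (c.blocksFun i) / (c.blocksFun i)! := by
  rw [bellPoly_eq_factorial_div_mul_coeff_pow hk, coeff_pow_sum_C_mul_X_pow,
    Fintype.piFinset_univ, sum_composition_length_eq_sum_fin_tuple n k fun v => x v / v !]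

theorem sum_bellPoly_eq_sum_composition {n : ℕ} (hn : 1 ≤ n) (x : ℕ → ℂ) :
    ∑ k ∈ Icc 1 n, bellPoly n k x =
      n ! * ∑ c : Composition n, (∏ i, x (c.blocksFun i) / (c.blocksFun i)!) / c.length ! := by
  have hlength (c : Composition n) (_ : c ∈ univ) : c.length ∈ Icc 1 n :=
    mem_Icc.2 ⟨c.length_pos_iff.2 hn, c.length_le⟩
  rw [← sum_fiberwise_of_maps_to hlength, mul_sum]
  refine sum_congr rfl fun k hk => ?_
  rw [bellPoly_eq_sum_composition (mem_Icc.1 hk).2, mul_sum, mul_sum]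
  refine sum_congr rfl fun c hc => ?_
  obtain rfl := (mem_filter.1 hc).2
  ring

/-- For `g` analytic at `z` and `n ≥ 1`, the `n`-th derivative of `w ↦ exp(g(w))` at `z`
equals `exp(g(z)) · Σ_{k=1}^{n} B_{n,k}(g′(z), …, g⁽ⁿ⁻ᵏ⁺¹⁾(z))`. -/
theorem iteratedDeriv_exp_comp_eq_sum_bellPoly (g : ℂ → ℂ) (z : ℂ)
    (hg : AnalyticAt ℂ g z) (n : ℕ) (hn : 1 ≤ n) :
    iteratedDeriv n (fun w => Complex.exp (g w)) z
      = Complex.exp (g z) *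
          ∑ k ∈ Finset.Icc 1 n, bellPoly n k (fun j => iteratedDeriv j g z) := by
  rw [show (fun w => Complex.exp (g w)) = Complex.exp ∘ g from rfl,
    analyticAt_cexp.iteratedDeriv_comp_eq_sum_composition hg, sum_bellPoly_eq_sum_composition hn]
  simp only [iteratedDeriv_eq_iterate, Complex.iter_deriv_exp, smul_eq_mul, ← sum_mul]
  ring
end

section
/- Let h : ℂ → ℂ be analytic at 0. Then the derivative of the function f(z) = h(z)·exp(−i/z) tends to 0 as z tends to 0 along the positive imaginary axis; that is, the limit as ε → 0⁺ of f′(iε) is 0. -/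
/-!
Writing `f z = h z * exp (-I / z)`, one has `f' z = (z ^ 2 * h' z + I * h z) * (exp (-I / z) / z ^ 2)`
for `z ≠ 0`. The first factor is continuous at `0`, and on the positive imaginary axis
`exp (-I / (I * ε)) = exp (-1 / ε)` is real and decays faster than any power of `ε`.
-/

open Filter Topology Complex

theorem hasDerivAt_exp_neg_I_div {z : ℂ} (hz : z ≠ 0) :
    HasDerivAt (fun w : ℂ => exp (-I / w)) (exp (-I / z) * (I / z ^ 2)) z := by
  have := ((hasDerivAt_inv hz).const_mul (-I)).cexp
  simp only [← div_eq_mul_inv] at this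
  exact this.congr_deriv (by ring)

theorem hasDerivAt_mul_exp_neg_I_div {h : ℂ → ℂ} {z : ℂ} (hh : DifferentiableAt ℂ h z)
    (hz : z ≠ 0) :
    HasDerivAt (fun w : ℂ => h w * exp (-I / w))
      ((z ^ 2 * deriv h z + I * h z) * (exp (-I / z) / z ^ 2)) z :=
  (hh.hasDerivAt.mul (hasDerivAt_exp_neg_I_div hz)).congr_deriv (by field_simp)

theorem exp_neg_I_div_I_mul_ofReal (ε : ℝ) : exp (-I / (I * ε)) = Real.exp (-ε⁻¹) := by
  rw [neg_div, div_mul_cancel_left₀ I_ne_zero]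
  push_cast
  rfl

theorem tendsto_I_mul_ofReal_nhdsGT_zero :
    Tendsto (fun ε : ℝ => I * ε) (𝓝[>] 0) (𝓝[≠] 0) := by
  refine tendsto_nhdsWithin_of_tendsto_nhds_of_eventually_within _ ?_ ?_
  · have : Continuous (fun ε : ℝ => I * ε) := by fun_prop
    simpa using (this.tendsto 0).mono_left nhdsWithin_le_nhds
  · filter_upwards [self_mem_nhdsWithin] with ε hε
    simpa using hε.ne'

theorem tendsto_exp_neg_I_div_div_pow_I_mul_ofReal (n : ℕ) :
    Tendsto (fun ε : ℝ => exp (-I / (I * ε)) / (I * ε) ^ n) (𝓝[>] 0) (𝓝 0) := by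
  rw [tendsto_zero_iff_norm_tendsto_zero]
  refine ((Real.tendsto_pow_mul_exp_neg_atTop_nhds_zero n).comp tendsto_inv_nhdsGT_zero).congr' ?_
  filter_upwards [self_mem_nhdsWithin] with ε (hε : 0 < ε)
  rw [exp_neg_I_div_I_mul_ofReal, norm_div, norm_pow, norm_mul, norm_I, one_mul, norm_real,
    norm_real, Real.norm_of_nonneg hε.le, Real.norm_of_nonneg (Real.exp_pos _).le]
  simp [div_eq_inv_mul]

/-- If `h` is analytic at `0`, then the derivative of `f(z) = h(z)·exp(−i/z)` tends
to `0` as `z → 0` along the positive imaginary axis, i.e. `f′(iε) → 0` as `ε → 0⁺`. -/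
theorem tendsto_deriv_exp_neg_inv_mul (h : ℂ → ℂ) (hh : AnalyticAt ℂ h 0) :
    Filter.Tendsto
      (fun ε : ℝ => deriv (fun z : ℂ => h z * Complex.exp (-Complex.I / z)) (Complex.I * ε))
      (nhdsWithin 0 (Set.Ioi 0)) (nhds 0) := by
  set k : ℂ → ℂ := fun z => z ^ 2 * deriv h z + I * h z
  have hk : ContinuousAt k 0 := by fun_prop
  have hderiv : ∀ᶠ ε : ℝ in 𝓝[>] 0, k (I * ε) * (exp (-I / (I * ε)) / (I * ε) ^ 2) =
      deriv (fun z : ℂ => h z * exp (-I / z)) (I * ε) := by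
    have hnear : ∀ᶠ z in 𝓝[≠] 0, AnalyticAt ℂ h z ∧ z ≠ 0 :=
      (eventually_nhdsWithin_of_eventually_nhds hh.eventually_analyticAt).and self_mem_nhdsWithin
    filter_upwards [tendsto_I_mul_ofReal_nhdsGT_zero.eventually hnear] with ε ⟨hA, hne⟩
    exact (hasDerivAt_mul_exp_neg_I_div hA.differentiableAt hne).deriv.symm
  have hlim := (hk.tendsto.comp (tendsto_I_mul_ofReal_nhdsGT_zero.mono_right
    nhdsWithin_le_nhds)).mul (tendsto_exp_neg_I_div_div_pow_I_mul_ofReal 2)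
  rw [mul_zero] at hlim
  exact hlim.congr' hderiv
end

section
/- Let f(w) = exp(−i/w) for w ≠ 0, and fix integers 1 ≤ k ≤ n. Then there exist complex coefficients c_{n+k}, …, c_{2n} such that for all z ≠ 0, exp(i·k/z) · B_{n,k}(f′(z), f″(z), …, f^{(n−k+1)}(z)) = Σ_{m=n+k}^{2n} c_m · z^{−m}; in particular, this function is a Laurent polynomial in 1/z whose terms all have degree at least n+k and at most 2n. -/
open Finset Complex Polynomial

def IsInvPolyIn {𝕜 : Type*} [Field 𝕜] (a b : ℕ) (g : 𝕜 → 𝕜) : Prop :=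
  ∃ p : 𝕜[X], X ^ a ∣ p ∧ p.natDegree ≤ b ∧ ∀ z ≠ 0, g z = p.eval z⁻¹

namespace IsInvPolyIn

variable {𝕜 : Type*} [Field 𝕜] {a b : ℕ} {g : 𝕜 → 𝕜}

theorem const_mul (t : 𝕜) (h : IsInvPolyIn a b g) : IsInvPolyIn a b (fun z => t * g z) := by
  obtain ⟨p, hdvd, hdeg, hg⟩ := h
  exact ⟨C t * p, dvd_mul_of_dvd_right hdvd _, (natDegree_C_mul_le t p).trans hdeg,
    fun z hz => by rw [eval_mul, eval_C, ← hg z hz]⟩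

theorem div_const (h : IsInvPolyIn a b g) (t : 𝕜) : IsInvPolyIn a b (fun z => g z / t) := by
  obtain ⟨p, hdvd, hdeg, hg⟩ := h
  exact ⟨p * C t⁻¹, dvd_mul_of_dvd_left hdvd _, (natDegree_mul_C_le p t⁻¹).trans hdeg,
    fun z hz => by rw [eval_mul, eval_C, ← hg z hz]; exact div_eq_mul_inv _ _⟩

theorem pow (h : IsInvPolyIn a b g) (m : ℕ) :
    IsInvPolyIn (m * a) (m * b) (fun z => g z ^ m) := by
  obtain ⟨p, hdvd, hdeg, hg⟩ := h
  refine ⟨p ^ m, ?_, natDegree_pow_le.trans (Nat.mul_le_mul_left m hdeg),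
    fun z hz => by rw [eval_pow, ← hg z hz]⟩
  rw [mul_comm, pow_mul]
  exact pow_dvd_pow_of_dvd hdvd m

theorem exists_sum_Icc (h : IsInvPolyIn a b g) :
    ∃ c : ℕ → 𝕜, ∀ z ≠ 0, g z = ∑ m ∈ Icc a b, c m * (z ^ m)⁻¹ := by
  obtain ⟨p, hdvd, hdeg, hg⟩ := h
  refine ⟨p.coeff, fun z hz => ?_⟩
  have hlow : ∀ m < a, p.coeff m = 0 := X_pow_dvd_iff.mp hdvd
  rw [hg z hz, eval_eq_sum_range' (Nat.lt_succ_of_le hdeg)]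
  refine (sum_subset (fun m hm => ?_) fun m hm hm' => ?_).symm.trans
    (sum_congr rfl fun m _ => by rw [inv_pow])
  · simp only [mem_Icc, mem_range] at hm ⊢
    omega
  · simp only [mem_Icc, mem_range, not_and_or, not_le] at hm hm'
    rw [hlow m (by omega), zero_mul]

end IsInvPolyIn

theorem isInvPolyIn_sum {𝕜 ι : Type*} [Field 𝕜] {a b : ℕ} (s : Finset ι) {g : ι → 𝕜 → 𝕜}
    (h : ∀ i ∈ s, IsInvPolyIn a b (g i)) : IsInvPolyIn a b (fun z => ∑ i ∈ s, g i z) := by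
  choose! p hdvd hdeg hg using h
  exact ⟨∑ i ∈ s, p i, dvd_sum hdvd, natDegree_sum_le_of_forall_le s p hdeg,
    fun z hz => by rw [eval_finsetSum]; exact sum_congr rfl fun i hi => hg i hi z hz⟩

theorem isInvPolyIn_prod {𝕜 ι : Type*} [Field 𝕜] (s : Finset ι) {a b : ι → ℕ}
    {g : ι → 𝕜 → 𝕜} (h : ∀ i ∈ s, IsInvPolyIn (a i) (b i) (g i)) :
    IsInvPolyIn (∑ i ∈ s, a i) (∑ i ∈ s, b i) (fun z => ∏ i ∈ s, g i z) := by
  choose! p hdvd hdeg hg using h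
  refine ⟨∏ i ∈ s, p i, ?_, (natDegree_prod_le s p).trans (sum_le_sum hdeg),
    fun z hz => by rw [eval_prod]; exact prod_congr rfl fun i hi => hg i hi z hz⟩
  rw [← prod_pow_eq_pow_sum]
  exact prod_dvd_prod_of_dvd _ _ hdvd

noncomputable def expNegInvDerivPoly : ℕ → ℂ[X]
  | 0 => 1
  | j + 1 => X ^ 2 * (C I * expNegInvDerivPoly j - derivative (expNegInvDerivPoly j))

theorem natDegree_expNegInvDerivPoly_le (j : ℕ) : (expNegInvDerivPoly j).natDegree ≤ 2 * j := by
  induction j with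
  | zero => simp [expNegInvDerivPoly]
  | succ j ih =>
    set P := expNegInvDerivPoly j
    have hsub : (C I * P - derivative P).natDegree ≤ P.natDegree := by
      simpa using natDegree_sub_le_of_le (natDegree_C_mul_le I P)
        ((natDegree_derivative_le P).trans (Nat.sub_le _ 1))
    calc (X ^ 2 * (C I * P - derivative P)).natDegree
        ≤ (X ^ 2 : ℂ[X]).natDegree + (C I * P - derivative P).natDegree := natDegree_mul_le
      _ ≤ 2 * (j + 1) := by rw [natDegree_X_pow]; omega

theorem X_pow_dvd_expNegInvDerivPoly_succ (j : ℕ) : X ^ (j + 2) ∣ expNegInvDerivPoly (j + 1) := by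
  induction j with
  | zero => exact dvd_mul_right _ _
  | succ j ih =>
    set P := expNegInvDerivPoly (j + 1)
    have hP : (X : ℂ[X]) ^ (j + 1) ∣ P := (pow_dvd_pow X (by omega : j + 1 ≤ j + 2)).trans ih
    have hP' : (X : ℂ[X]) ^ (j + 1) ∣ derivative P := by
      simpa using pow_sub_one_dvd_derivative_of_pow_dvd ih
    rw [show j + 1 + 2 = 2 + (j + 1) by omega, pow_add]
    exact mul_dvd_mul_left _ (dvd_sub (dvd_mul_of_dvd_right hP _) hP')

theorem isInvPolyIn_eval_expNegInvDerivPoly_succ (j : ℕ) :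
    IsInvPolyIn (j + 2) (2 * j + 2) (fun z => (expNegInvDerivPoly (j + 1)).eval z⁻¹) :=
  ⟨_, X_pow_dvd_expNegInvDerivPoly_succ j, natDegree_expNegInvDerivPoly_le (j + 1),
    fun _ _ => rfl⟩

theorem hasDerivAt_exp_neg_I_div_mul_eval_inv (p : ℂ[X]) {z : ℂ} (hz : z ≠ 0) :
    HasDerivAt (fun w => exp (-I / w) * p.eval w⁻¹)
      (exp (-I / z) * (X ^ 2 * (C I * p - derivative p)).eval z⁻¹) z := by
  have hexp : HasDerivAt (fun w => exp (-I / w)) (exp (-I / z) * (-I * -(z ^ 2)⁻¹)) z := by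
    simpa only [div_eq_mul_inv] using ((hasDerivAt_inv hz).const_mul (-I)).cexp
  have hpoly : HasDerivAt (fun w => p.eval w⁻¹) ((derivative p).eval z⁻¹ * -(z ^ 2)⁻¹) z :=
    (p.hasDerivAt z⁻¹).comp z (hasDerivAt_inv hz)
  refine (hexp.fun_mul hpoly).congr_deriv ?_
  simp only [eval_mul, eval_pow, eval_X, eval_sub, eval_C]
  ring

theorem iteratedDeriv_exp_neg_I_div (j : ℕ) {z : ℂ} (hz : z ≠ 0) :
    iteratedDeriv j (fun w => exp (-I / w)) z = exp (-I / z) * (expNegInvDerivPoly j).eval z⁻¹ := by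
  induction j generalizing z with
  | zero => simp [expNegInvDerivPoly]
  | succ j ih =>
    have hnear : iteratedDeriv j (fun w => exp (-I / w))
        =ᶠ[nhds z] fun w => exp (-I / w) * (expNegInvDerivPoly j).eval w⁻¹ :=
      eventually_ne_nhds hz |>.mono fun w hw => ih hw
    rw [iteratedDeriv_succ, hnear.deriv_eq,
      (hasDerivAt_exp_neg_I_div_mul_eval_inv _ hz).deriv, expNegInvDerivPoly]

theorem bellPoly_const_mul (n k : ℕ) (a : ℂ) (x : ℕ → ℂ) :
    bellPoly n k (fun j => a * x j) = a ^ k * bellPoly n k x := by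
  rw [bellPoly, bellPoly, mul_sum]
  refine sum_congr rfl fun p hp => ?_
  have hk : ∑ i, p i = k := (mem_filter.mp hp).2.1
  simp_rw [mul_div_assoc, mul_pow, prod_mul_distrib, prod_pow_eq_pow_sum, hk]
  ring

theorem isInvPolyIn_bellPoly (n k : ℕ) {x : ℕ → ℂ → ℂ}
    (hx : ∀ j, IsInvPolyIn (j + 2) (2 * j + 2) (x (j + 1))) :
    IsInvPolyIn (n + k) (2 * n) (fun z => bellPoly n k (fun j => x j z)) := by
  refine isInvPolyIn_sum _ fun p hp => IsInvPolyIn.const_mul _ ?_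
  obtain ⟨-, hk, hn⟩ := mem_filter.mp hp
  have hprod := isInvPolyIn_prod univ fun (i : Fin (n - k + 1)) _ =>
    ((hx i).div_const (((i : ℕ) + 1).factorial : ℂ)).pow (p i)
  have hlow : ∑ i : Fin (n - k + 1), p i * ((i : ℕ) + 2) = n + k := by
    simp_rw [← hn, ← hk, ← sum_add_distrib]
    exact sum_congr rfl fun i _ => by ring
  have hhigh : ∑ i : Fin (n - k + 1), p i * (2 * (i : ℕ) + 2) = 2 * n := by
    simp_rw [← hn, mul_sum]
    exact sum_congr rfl fun i _ => by ring
  rwa [hlow, hhigh] at hprod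

theorem bellPoly_exp_neg_inv_laurent_general (n k : ℕ) :
    ∃ c : ℕ → ℂ, ∀ z : ℂ, z ≠ 0 →
      Complex.exp (Complex.I * k / z) *
          bellPoly n k (fun j => iteratedDeriv j (fun w => Complex.exp (-Complex.I / w)) z)
        = ∑ m ∈ Finset.Icc (n + k) (2 * n), c m * (z ^ m)⁻¹ := by
  obtain ⟨c, hc⟩ := (isInvPolyIn_bellPoly n k
    (x := fun j z => (expNegInvDerivPoly j).eval z⁻¹)
    isInvPolyIn_eval_expNegInvDerivPoly_succ).exists_sum_Icc
  refine ⟨c, fun z hz => ?_⟩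
  have hcancel : exp (I * k / z) * exp (-I / z) ^ k = 1 := by
    rw [← exp_nat_mul, ← exp_add, show I * k / z + k * (-I / z) = 0 by ring, exp_zero]
  simp_rw [iteratedDeriv_exp_neg_I_div _ hz, bellPoly_const_mul, ← mul_assoc, hcancel, one_mul]
  exact hc z hz

/-- For `f(w) = exp(−i/w)` and `1 ≤ k ≤ n`, the function
`z ↦ exp(i k/z) · B_{n,k}(f′(z), …, f⁽ⁿ⁻ᵏ⁺¹⁾(z))` is a Laurent polynomial in `1/z`
whose terms all have degree at least `n + k` and at most `2n`. -/
theorem bellPoly_exp_neg_inv_laurent (n k : ℕ) (hk : 1 ≤ k) (hkn : k ≤ n) :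
    ∃ c : ℕ → ℂ, ∀ z : ℂ, z ≠ 0 →
      Complex.exp (Complex.I * k / z) *
          bellPoly n k (fun j => iteratedDeriv j (fun w => Complex.exp (-Complex.I / w)) z)
        = ∑ m ∈ Finset.Icc (n + k) (2 * n), c m * (z ^ m)⁻¹ :=
  bellPoly_exp_neg_inv_laurent_general n k
end
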